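/- Let A be an n×n irreducible Stieltjes matrix with smallest eigenvalue μ, and let λ > μ. Suppose each f_i maps [0,∞) into [0,∞), is continuously differentiable on [0,∞), and satisfies f_i(t)/t → 0 as t → 0⁺ and f_i(t)/t → ∞ as t → ∞. Then there exists x ∈ ℝⁿ with x_i > 0 for all i such that A x + F(x) = λ x. If in addition, for every i, f_i(s)/s < f_i(t)/t whenever 0 < s < t, then this positive solution x is unique. -/

import Mathlib

/-!
Writing `F x = (f i (x i))ᵢ`, the solutions of `A x + F x = λ x` are the fixed points of
`Φ x = x + τ (λ x - A x - F x)`. For small `τ > 0` this map is order preserving on a box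
`[0, b]`: the off-diagonal entries of `A` are nonpositive, and `τ` absorbs the diagonal entry and
the Lipschitz constant of `f i` on `[0, b i]`. Perron–Frobenius for the irreducible Stieltjes
matrix gives a positive eigenvector `φ` for `μ`; since `f i t / t` tends to `0` at `0⁺` and to
`∞` at `∞`, small multiples `ε φ` satisfy `Φ (ε φ) ≥ ε φ` and large multiples `T φ` satisfy
`Φ (T φ) ≤ T φ`, so Knaster–Tarski on `[ε φ, T φ]` produces a positive solution.
For uniqueness, compare two positive solutions `x, z` at an index maximising `z i / x i`.
-/

open Matrix Filter Topology Set
open scoped NNReal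

theorem exists_isFixedPt_of_monotoneOn_Icc {α : Type*} [ConditionallyCompleteLattice α]
    {a b : α} {Φ : α → α} (hab : a ≤ b) (hΦ : MonotoneOn Φ (Icc a b)) (ha : a ≤ Φ a)
    (hb : Φ b ≤ b) : ∃ x ∈ Icc a b, Φ x = x := by
  have : Fact (a ≤ b) := ⟨hab⟩
  have hmaps (x : α) (hx : x ∈ Icc a b) : Φ x ∈ Icc a b :=
    ⟨ha.trans (hΦ (left_mem_Icc.2 hab) hx hx.1), (hΦ hx (right_mem_Icc.2 hab) hx.2).trans hb⟩
  let g : Icc a b →o Icc a b := ⟨fun x => ⟨Φ x, hmaps x x.2⟩, fun x y hxy => hΦ x.2 y.2 hxy⟩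
  exact ⟨g.lfp, g.lfp.2, congrArg Subtype.val g.map_lfp⟩

theorem eventually_lt_mul_of_tendsto_div {l : Filter ℝ} (hl : ∀ᶠ t in l, 0 < t) {g : ℝ → ℝ}
    {a c : ℝ} (hg : Tendsto (fun t => g t / t) l (𝓝 a)) (hac : a < c) :
    ∀ᶠ t in l, g t < c * t := by
  filter_upwards [hg.eventually_lt_const hac, hl] with t h ht
  exact (div_lt_iff₀ ht).1 h

theorem eventually_mul_le_of_tendsto_div_atTop {l : Filter ℝ} (hl : ∀ᶠ t in l, 0 < t)
    {g : ℝ → ℝ} (hg : Tendsto (fun t => g t / t) l atTop) (c : ℝ) :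
    ∀ᶠ t in l, c * t ≤ g t := by
  filter_upwards [hg.eventually_ge_atTop c, hl] with t h ht
  exact (le_div_iff₀ ht).1 h

namespace Matrix

variable {ι : Type*} [Fintype ι] {A : Matrix ι ι ℝ}

theorem mulVec_apply_sub_le_of_offDiag_nonpos (hA : ∀ i j, i ≠ j → A i j ≤ 0) {x y : ι → ℝ}
    (hxy : x ≤ y) (i : ι) : (A *ᵥ y) i - (A *ᵥ x) i ≤ A i i * (y i - x i) := by
  classical
  have hoff : ∑ j ∈ Finset.univ.erase i, A i j * (y j - x j) ≤ 0 :=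
    Finset.sum_nonpos fun j hj => mul_nonpos_of_nonpos_of_nonneg
      (hA i j (Finset.ne_of_mem_erase hj).symm) (sub_nonneg.2 (hxy j))
  rw [← Pi.sub_apply, ← mulVec_sub, mulVec, dotProduct,
    ← Finset.add_sum_erase _ _ (Finset.mem_univ i)]
  simpa using hoff

theorem abs_dotProduct_mulVec_abs_le (hA : ∀ i j, i ≠ j → A i j ≤ 0) (x : ι → ℝ) :
    |x| ⬝ᵥ A *ᵥ |x| ≤ x ⬝ᵥ A *ᵥ x := by
  simp only [dotProduct, mulVec, Finset.mul_sum, Pi.abs_apply]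
  refine Finset.sum_le_sum fun i _ => Finset.sum_le_sum fun j _ => ?_
  rcases eq_or_ne i j with rfl | hij
  · exact le_of_eq (by linear_combination A i i * abs_mul_abs_self (x i))
  · have := mul_le_mul_of_nonpos_left (le_abs_self (x i * x j)) (hA i j hij)
    rw [abs_mul] at this
    linarith

theorem pos_of_mulVec_eq_smul (hA : ∀ i j, i ≠ j → A i j ≤ 0)
    (hirr : ∀ S : Set ι, S.Nonempty → S ≠ univ → ∃ i ∈ S, ∃ j, j ∉ S ∧ A i j ≠ 0)
    {μ : ℝ} {v : ι → ℝ} (hv0 : 0 ≤ v) (hv : v ≠ 0) (hAv : A *ᵥ v = μ • v) (i : ι) :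
    0 < v i := by
  by_contra! hvi
  obtain ⟨k, hk_mem, j, hj, hAkj⟩ := hirr {i | v i = 0} ⟨i, le_antisymm hvi (hv0 i)⟩
    fun h => hv (funext fun l => (h ▸ mem_univ l : l ∈ {i | v i = 0}))
  have hk : v k = 0 := hk_mem
  have hterms : ∀ l ∈ Finset.univ, A k l * v l ≤ 0 := by
    intro l _
    rcases eq_or_ne k l with rfl | hkl
    · simp [hk]
    · exact mul_nonpos_of_nonpos_of_nonneg (hA k l hkl) (hv0 l)
  have hrow : ∑ l, A k l * v l = 0 := by
    simpa [mulVec, dotProduct, hk] using congrFun hAv k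
  have hkj : A k j * v j = 0 :=
    (Finset.sum_eq_zero_iff_of_nonpos hterms).1 hrow j (Finset.mem_univ j)
  exact hAkj ((mul_eq_zero.1 hkj).resolve_right hj)

theorem IsHermitian.posSemidef_sub_smul_one [DecidableEq ι] (hA : A.IsHermitian) {μ : ℝ}
    (hμ : ∀ (μ' : ℝ) (x : ι → ℝ), x ≠ 0 → A *ᵥ x = μ' • x → μ ≤ μ') :
    (A - μ • 1).PosSemidef := by
  have hB : (A - μ • 1).IsHermitian := hA.sub (by simp [IsHermitian])
  refine hB.posSemidef_iff_eigenvalues_nonneg.2 fun i => show 0 ≤ hB.eigenvalues i from ?_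
  have hv : (hB.eigenvectorBasis i : ι → ℝ) ≠ 0 := by
    simpa using hB.eigenvectorBasis.orthonormal.ne_zero i
  have := hμ _ _ hv (by
    have := hB.mulVec_eigenvectorBasis i
    rw [sub_mulVec, smul_mulVec, one_mulVec, sub_eq_iff_eq_add] at this
    rw [this, add_smul, add_comm])
  linarith

theorem exists_pos_eigenvector_of_offDiag_nonpos (hA_herm : A.IsHermitian)
    (hA : ∀ i j, i ≠ j → A i j ≤ 0)
    (hirr : ∀ S : Set ι, S.Nonempty → S ≠ univ → ∃ i ∈ S, ∃ j, j ∉ S ∧ A i j ≠ 0) {μ : ℝ}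
    (hμ_eig : ∃ x : ι → ℝ, x ≠ 0 ∧ A *ᵥ x = μ • x)
    (hμ_min : ∀ (μ' : ℝ) (x : ι → ℝ), x ≠ 0 → A *ᵥ x = μ' • x → μ ≤ μ') :
    ∃ φ : ι → ℝ, (∀ i, 0 < φ i) ∧ A *ᵥ φ = μ • φ := by
  classical
  obtain ⟨x, hx0, hx⟩ := hμ_eig
  have hB := hA_herm.posSemidef_sub_smul_one hμ_min
  have hB_mulVec (v : ι → ℝ) : (A - μ • 1) *ᵥ v = A *ᵥ v - μ • v := by
    rw [sub_mulVec, smul_mulVec, one_mulVec]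
  have hB_offDiag (i j : ι) (hij : i ≠ j) : (A - μ • 1) i j ≤ 0 := by
    simpa [one_apply_ne hij] using hA i j hij
  -- `|x|` minimises the quadratic form of the positive semidefinite `A - μ • 1` as well as `x`
  have hB_abs : (A - μ • 1) *ᵥ |x| = 0 := by
    refine (hB.dotProduct_mulVec_zero_iff _).1 (le_antisymm ?_ (hB.dotProduct_mulVec_nonneg _))
    calc star |x| ⬝ᵥ (A - μ • 1) *ᵥ |x| ≤ x ⬝ᵥ (A - μ • 1) *ᵥ x :=
          abs_dotProduct_mulVec_abs_le hB_offDiag x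
      _ = 0 := by simp [hB_mulVec, hx]
  have hφ : A *ᵥ |x| = μ • |x| := sub_eq_zero.1 (hB_mulVec _ ▸ hB_abs)
  exact ⟨|x|, pos_of_mulVec_eq_smul hA hirr (abs_nonneg x) (by simpa using hx0) hφ, hφ⟩

end Matrix

section SemilinearEigenproblem

variable {ι : Type*} [Fintype ι] {A : Matrix ι ι ℝ} {f : ι → ℝ → ℝ} {lam : ℝ}

def semilinearResidual (A : Matrix ι ι ℝ) (f : ι → ℝ → ℝ) (lam : ℝ) (x : ι → ℝ) : ι → ℝ :=
  lam • x - A *ᵥ x - fun i => f i (x i)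

theorem semilinearResidual_smul_eigenvector {μ : ℝ} {φ : ι → ℝ} (hφ : A *ᵥ φ = μ • φ) (c : ℝ)
    (i : ι) :
    semilinearResidual A f lam (c • φ) i = (lam - μ) * (c * φ i) - f i (c * φ i) := by
  simp only [semilinearResidual, mulVec_smul, hφ, Pi.sub_apply, Pi.smul_apply, smul_eq_mul]
  ring

theorem monotoneOn_add_smul_semilinearResidual (hA : ∀ i j, i ≠ j → A i j ≤ 0) {b : ι → ℝ}
    {C : ι → ℝ≥0} (hf : ∀ i, LipschitzOnWith (C i) (f i) (Icc 0 (b i))) {τ : ℝ} (hτ : 0 ≤ τ)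
    (hτC : ∀ i, τ * (A i i + C i - lam) ≤ 1) :
    MonotoneOn (fun x => x + τ • semilinearResidual A f lam x) (Icc 0 b) := by
  intro x hx y hy hxy i
  have hAxy := mulVec_apply_sub_le_of_offDiag_nonpos hA hxy i
  have hfxy : f i (y i) - f i (x i) ≤ C i * (y i - x i) := by
    have := (hf i).dist_le_mul (y i) ⟨hy.1 i, hy.2 i⟩ (x i) ⟨hx.1 i, hx.2 i⟩
    rw [Real.dist_eq, Real.dist_eq, abs_of_nonneg (sub_nonneg.2 (hxy i))] at this
    exact (le_abs_self _).trans this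
  simp only [semilinearResidual, Pi.add_apply, Pi.smul_apply, Pi.sub_apply, smul_eq_mul]
  linarith [mul_le_mul_of_nonneg_left hAxy hτ, mul_le_mul_of_nonneg_left hfxy hτ,
    mul_nonneg (sub_nonneg.2 (hxy i)) (sub_nonneg.2 (hτC i))]

theorem exists_pos_solution_of_pos_eigenvector (hA : ∀ i j, i ≠ j → A i j ≤ 0) {μ : ℝ}
    {φ : ι → ℝ} (hφ_pos : ∀ i, 0 < φ i) (hφ : A *ᵥ φ = μ • φ) (hlam : μ < lam)
    (hf_smooth : ∀ i, ContDiffOn ℝ 1 (f i) (Ici 0))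
    (hf_lim0 : ∀ i, Tendsto (fun t => f i t / t) (𝓝[>] 0) (𝓝 0))
    (hf_liminf : ∀ i, Tendsto (fun t => f i t / t) atTop atTop) :
    ∃ x : ι → ℝ, (∀ i, 0 < x i) ∧ A *ᵥ x + (fun i => f i (x i)) = lam • x := by
  have hsmall : ∀ᶠ ε in 𝓝[>] 0, ∀ i, f i (ε * φ i) < (lam - μ) * (ε * φ i) :=
    eventually_all.2 fun i => by
      have hφi : Tendsto (fun ε => ε * φ i) (𝓝[>] 0) (𝓝[>] 0) := by
        simpa using TendstoNhdsWithinIoi.mul_const (hφ_pos i) (tendsto_id (x := 𝓝[>] (0 : ℝ)))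
      exact hφi.eventually (eventually_lt_mul_of_tendsto_div self_mem_nhdsWithin (hf_lim0 i)
        (sub_pos.2 hlam))
  obtain ⟨ε, hε_sub, hε⟩ := (hsmall.and self_mem_nhdsWithin).exists
  have hlarge : ∀ᶠ T in atTop, ∀ i, (lam - μ) * (T * φ i) ≤ f i (T * φ i) :=
    eventually_all.2 fun i => (tendsto_id.atTop_mul_const (hφ_pos i)).eventually
      (eventually_mul_le_of_tendsto_div_atTop (eventually_gt_atTop 0) (hf_liminf i) _)
  obtain ⟨T, hT_super, hεT⟩ := (hlarge.and (eventually_ge_atTop ε)).exists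
  choose C hC using fun i => ((hf_smooth i).mono Icc_subset_Ici_self).exists_lipschitzOnWith
    one_ne_zero (convex_Icc 0 (T * φ i)) isCompact_Icc
  have hτ_small : ∀ᶠ τ in 𝓝[>] (0 : ℝ), ∀ i, τ * (A i i + C i - lam) ≤ 1 :=
    eventually_all.2 fun i => nhdsWithin_le_nhds <|
      ((continuous_mul_const _).tendsto' 0 0 (zero_mul _)).eventually (eventually_le_nhds one_pos)
  obtain ⟨τ, hτC, hτ⟩ := (hτ_small.and self_mem_nhdsWithin).exists
  have hεφ : 0 ≤ ε • φ := smul_nonneg hε.le fun i => (hφ_pos i).le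
  have hmono := monotoneOn_add_smul_semilinearResidual hA (b := T • φ) (by simpa using hC)
    hτ.le hτC
  obtain ⟨x, ⟨hεx, -⟩, hx⟩ := exists_isFixedPt_of_monotoneOn_Icc
    (smul_le_smul_of_nonneg_right hεT fun i => (hφ_pos i).le)
    (hmono.mono (Icc_subset_Icc_left hεφ))
    (le_add_of_nonneg_right (smul_nonneg hτ.le fun i => by
      rw [Pi.zero_apply, semilinearResidual_smul_eigenvector hφ]; linarith [hε_sub i]))
    (add_le_of_nonpos_right (smul_nonpos_of_nonneg_of_nonpos hτ.le fun i => by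
      rw [Pi.zero_apply, semilinearResidual_smul_eigenvector hφ]; linarith [hT_super i]))
  refine ⟨x, fun i => (mul_pos hε (hφ_pos i)).trans_le (hεx i), ?_⟩
  have hres : semilinearResidual A f lam x = 0 := by
    simpa [hτ.ne'] using hx
  rw [semilinearResidual, sub_sub, sub_eq_zero] at hres
  exact hres.symm

theorem le_of_pos_solution (hA : ∀ i j, i ≠ j → A i j ≤ 0)
    (hstrict : ∀ (i : ι) (s t : ℝ), 0 < s → s < t → f i s / s < f i t / t)
    {x z : ι → ℝ} (hx : ∀ i, 0 < x i) (hxe : A *ᵥ x + (fun i => f i (x i)) = lam • x)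
    (hze : A *ᵥ z + (fun i => f i (z i)) = lam • z) : z ≤ x := by
  intro i
  have : Nonempty ι := ⟨i⟩
  obtain ⟨k, hk⟩ := Finite.exists_max fun j => z j / x j
  set t := z k / x k
  have hzt : z ≤ t • x := fun j => by
    simpa [div_le_iff₀ (hx j)] using hk j
  have hzk : z k = t * x k := (div_mul_cancel₀ _ (hx k).ne').symm
  suffices t ≤ 1 by
    simpa using (hzt i).trans (mul_le_of_le_one_left (hx i).le this)
  by_contra! ht
  have hA_row : (A *ᵥ (t • x)) k - (A *ᵥ z) k ≤ 0 := by
    simpa [hzk] using mulVec_apply_sub_le_of_offDiag_nonpos hA hzt k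
  have hf_row : f k (x k) / x k < f k (z k) / z k :=
    hstrict k _ _ (hx k) (by rw [hzk]; exact lt_mul_of_one_lt_left (hx k) ht)
  rw [hzk, div_lt_div_iff₀ (hx k) (mul_pos (by linarith) (hx k))] at hf_row
  have hxk := congrFun hxe k
  have hzk' := congrFun hze k
  simp only [mulVec_smul, Pi.add_apply, Pi.smul_apply, smul_eq_mul] at hxk hzk' hA_row
  rw [hzk] at hzk'
  have hf_sub : f k (t * x k) ≤ t * f k (x k) := by linear_combination hzk' - t * hxk + hA_row
  linarith [mul_le_mul_of_nonneg_right hf_sub (hx k).le]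

end SemilinearEigenproblem

theorem stmt_2 (n : ℕ) (A : Matrix (Fin n) (Fin n) ℝ)
    (hA_irred : ∀ S : Set (Fin n), S.Nonempty → S ≠ Set.univ →
      ∃ i ∈ S, ∃ j, j ∉ S ∧ A i j ≠ 0)
    (hA_posdef : A.PosDef)
    (hA_offdiag : ∀ i j : Fin n, i ≠ j → A i j ≤ 0)
    (μ : ℝ)
    (hμ_eig : ∃ x : Fin n → ℝ, x ≠ 0 ∧ A.mulVec x = μ • x)
    (hμ_min : ∀ (μ' : ℝ) (x : Fin n → ℝ), x ≠ 0 → A.mulVec x = μ' • x → μ ≤ μ')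
    (lam : ℝ) (hlam : μ < lam)
    (f : Fin n → ℝ → ℝ)
    (hf_smooth : ∀ i, ContDiffOn ℝ 1 (f i) (Set.Ici 0))
    (hf_lim0 : ∀ i, Filter.Tendsto (fun t => f i t / t) (nhdsWithin 0 (Set.Ioi 0)) (nhds 0))
    (hf_liminf : ∀ i, Filter.Tendsto (fun t => f i t / t) Filter.atTop Filter.atTop) :
    (∃ x : Fin n → ℝ, (∀ i, 0 < x i) ∧ A.mulVec x + (fun i => f i (x i)) = lam • x) ∧
    ((∀ (i : Fin n) (s t : ℝ), 0 < s → s < t → f i s / s < f i t / t) →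
      ∃! x : Fin n → ℝ, (∀ i, 0 < x i) ∧ A.mulVec x + (fun i => f i (x i)) = lam • x) := by
  obtain ⟨φ, hφ_pos, hφ⟩ := exists_pos_eigenvector_of_offDiag_nonpos hA_posdef.isHermitian
    hA_offdiag hA_irred hμ_eig hμ_min
  obtain ⟨x, hx_pos, hx⟩ := exists_pos_solution_of_pos_eigenvector hA_offdiag hφ_pos hφ hlam
    hf_smooth hf_lim0 hf_liminf
  refine ⟨⟨x, hx_pos, hx⟩, fun hstrict => ⟨x, ⟨hx_pos, hx⟩, fun z ⟨hz_pos, hz⟩ => ?_⟩⟩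
  exact le_antisymm (le_of_pos_solution hA_offdiag hstrict hx_pos hx hz)
    (le_of_pos_solution hA_offdiag hstrict hz_pos hz hx)
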